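/- Let λ ≥ 1 and let X be a λ-extendably locally reflexive complex Banach space. Then for all finite-dimensional subspaces F ⊆ X* and G ⊆ X** and every ε > 0, there exists a bounded linear operator T : X** → X** such that T(G) ⊆ ι_X(X), (Tg)(f) = g(f) for all g ∈ G and f ∈ F, ‖T‖ < λ + ε, and moreover Tg = g for every g ∈ G ∩ ι_X(X). -/

import Mathlib

/-- The topological dual, with its meaning in the older Mathlib (`NormedSpace.Dual`). -/
abbrev NormedSpace.Dual (𝕜 : Type*) (E : Type*) [NontriviallyNormedField 𝕜] [SeminormedAddCommGroup E]
    [NormedSpace 𝕜 E] : Type _ :=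
  E →L[𝕜] 𝕜

open NormedSpace

/-- `X` is `λ`-extendably locally reflexive. -/
def IsELR (X : Type*) [NormedAddCommGroup X] [NormedSpace ℂ X] (lam : ℝ) : Prop :=
  ∀ (F : Subspace ℂ (Dual ℂ X)) (G : Subspace ℂ (Dual ℂ (Dual ℂ X))),
    FiniteDimensional ℂ F → FiniteDimensional ℂ G →
    ∀ ε : ℝ, 0 < ε →
      ∃ T : Dual ℂ (Dual ℂ X) →L[ℂ] Dual ℂ (Dual ℂ X),
        (∀ g ∈ G, T g ∈ Set.range (inclusionInDoubleDual ℂ X)) ∧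
        (∀ g ∈ G, ∀ f ∈ F, T g f = g f) ∧
        ‖T‖ < lam + ε

/-! Let `V = G ∩ ι(X)` and pick `x₁, …, xₙ ∈ X` with `(ι xᵢ)ᵢ` a basis of `V`. The tuples
`(ι⁻¹ (T (ι xᵢ)))ᵢ ∈ Xⁿ`, over the operators `T` allowed by `λ`-ELR with a slightly larger norm
bound, form a convex set whose closure contains `(xᵢ)ᵢ`: otherwise Hahn–Banach separates them by
a functional `v ↦ ∑ φᵢ (vᵢ)`, and an ELR operator for `F + span {φᵢ}` yields a tuple on which that
functional takes the same value as on `(xᵢ)ᵢ`. Hence some allowed `T` is close to the identity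
on `V`, and `T + (1 - T) Q`, for a bounded projection `Q` onto `V`, fixes `V` at the cost of a
small increase of the norm. -/

theorem norm_inclusionInDoubleDual {𝕜 E : Type*} [RCLike 𝕜] [SeminormedAddCommGroup E]
    [NormedSpace 𝕜 E] (x : E) : ‖inclusionInDoubleDual 𝕜 E x‖ = ‖x‖ :=
  (inclusionInDoubleDualLi 𝕜).norm_map x

theorem Submodule.exists_norm_apply_le_of_finiteDimensional {𝕜 E F : Type*}
    [NontriviallyNormedField 𝕜] [CompleteSpace 𝕜] [NormedAddCommGroup E] [NormedSpace 𝕜 E]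
    [NormedAddCommGroup F] [NormedSpace 𝕜 F] (V : Submodule 𝕜 E) [FiniteDimensional 𝕜 V] :
    ∃ (n : ℕ) (e : Fin n → V) (C : ℝ), 0 < C ∧ ∀ (u : E →L[𝕜] F) {M : ℝ}, 0 ≤ M →
      (∀ i, ‖u (e i)‖ ≤ M) → ∀ v ∈ V, ‖u v‖ ≤ C * M * ‖v‖ := by
  obtain ⟨C, hC, hCb⟩ := (Module.finBasis 𝕜 V).exists_opNorm_le (F := F)
  refine ⟨_, Module.finBasis 𝕜 V, C, hC, fun u M hM hu v hv => ?_⟩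
  exact (u ∘L V.subtypeL).le_of_opNorm_le (hCb hM hu) ⟨v, hv⟩

theorem ContinuousLinearMap.opNorm_add_id_sub_comp_le {𝕜 E : Type*} [NontriviallyNormedField 𝕜]
    [NormedAddCommGroup E] [NormedSpace 𝕜 E] (T Q : E →L[𝕜] E) {V : Submodule 𝕜 E}
    (hQV : ∀ z, Q z ∈ V) {η : ℝ} (hη : 0 ≤ η) (hTV : ∀ v ∈ V, ‖v - T v‖ ≤ η * ‖v‖) :
    ‖T + (ContinuousLinearMap.id 𝕜 E - T) ∘L Q‖ ≤ ‖T‖ + η * ‖Q‖ := by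
  refine opNorm_le_bound _ (by positivity) fun z => ?_
  calc ‖T z + (Q z - T (Q z))‖ ≤ ‖T z‖ + η * ‖Q z‖ :=
        (norm_add_le _ _).trans (by gcongr; exact hTV _ (hQV z))
    _ ≤ ‖T‖ * ‖z‖ + η * (‖Q‖ * ‖z‖) := by gcongr <;> exact le_opNorm _ _
    _ = (‖T‖ + η * ‖Q‖) * ‖z‖ := by ring

section LocalReflexivity

variable {X : Type*} [NormedAddCommGroup X] [NormedSpace ℂ X]

def IsLocalReflexivityOperator (F : Subspace ℂ (Dual ℂ X)) (G : Subspace ℂ (Dual ℂ (Dual ℂ X)))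
    (c : ℝ) (T : Dual ℂ (Dual ℂ X) →L[ℂ] Dual ℂ (Dual ℂ X)) : Prop :=
  (∀ g ∈ G, T g ∈ (inclusionInDoubleDual ℂ X).range) ∧
    (∀ g ∈ G, ∀ f ∈ F, T g f = g f) ∧ ‖T‖ ≤ c

variable {F : Subspace ℂ (Dual ℂ X)} {G : Subspace ℂ (Dual ℂ (Dual ℂ X))} {c : ℝ}
  {T S : Dual ℂ (Dual ℂ X) →L[ℂ] Dual ℂ (Dual ℂ X)}

theorem IsLocalReflexivityOperator.convexCombination (hT : IsLocalReflexivityOperator F G c T)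
    (hS : IsLocalReflexivityOperator F G c S) {a b : ℝ} (ha : 0 ≤ a) (hb : 0 ≤ b)
    (hab : a + b = 1) : IsLocalReflexivityOperator F G c ((a : ℂ) • T + (b : ℂ) • S) := by
  obtain ⟨hTX, hTF, hTc⟩ := hT
  obtain ⟨hSX, hSF, hSc⟩ := hS
  refine ⟨fun g hg => ?_, fun g hg f hf => ?_, ?_⟩
  · exact add_mem (Submodule.smul_mem _ _ (hTX g hg)) (Submodule.smul_mem _ _ (hSX g hg))
  · simp only [add_apply, smul_apply, hTF g hg f hf, hSF g hg f hf, ← add_smul,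
      ← Complex.ofReal_add, hab, Complex.ofReal_one, one_smul]
  · calc ‖(a : ℂ) • T + (b : ℂ) • S‖ ≤ a * ‖T‖ + b * ‖S‖ := by
          refine (ContinuousLinearMap.opNorm_add_le _ _).trans (add_le_add ?_ ?_)
          · exact (ContinuousLinearMap.opNorm_smul_le _ _).trans_eq
              (by rw [Complex.norm_real, Real.norm_of_nonneg ha])
          · exact (ContinuousLinearMap.opNorm_smul_le _ _).trans_eq
              (by rw [Complex.norm_real, Real.norm_of_nonneg hb])
      _ ≤ a * c + b * c := by gcongr
      _ = c := by rw [← add_mul, hab, one_mul]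

theorem convex_setOf_exists_isLocalReflexivityOperator {ι : Type*} (F G) (c : ℝ)
    (g : ι → Dual ℂ (Dual ℂ X)) :
    Convex ℝ {v : ι → X | ∃ T, IsLocalReflexivityOperator F G c T ∧
      ∀ i, inclusionInDoubleDual ℂ X (v i) = T (g i)} := by
  rintro v ⟨T, hT, hvT⟩ w ⟨S, hS, hwS⟩ a b ha hb hab
  refine ⟨_, hT.convexCombination hS ha hb hab, fun i => ?_⟩
  simp only [Pi.add_apply, Pi.smul_apply, ← Complex.coe_smul, map_add, map_smul, hvT, hwS]
  rfl

theorem IsELR.mem_closure_setOf_exists_isLocalReflexivityOperator {lam : ℝ} (hX : IsELR X lam)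
    (F : Subspace ℂ (Dual ℂ X)) (G : Subspace ℂ (Dual ℂ (Dual ℂ X))) [FiniteDimensional ℂ F]
    [FiniteDimensional ℂ G] {c : ℝ} (hc : lam < c) {ι : Type*} [Fintype ι] (x : ι → X)
    (hxG : ∀ i, inclusionInDoubleDual ℂ X (x i) ∈ G) :
    x ∈ closure {v : ι → X | ∃ T, IsLocalReflexivityOperator F G c T ∧
      ∀ i, inclusionInDoubleDual ℂ X (v i) = T (inclusionInDoubleDual ℂ X (x i))} := by
  classical
  by_contra hx
  obtain ⟨f, u, hfx, hfK⟩ := RCLike.geometric_hahn_banach_point_closed (𝕜 := ℂ)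
    (convex_setOf_exists_isLocalReflexivityOperator F G c _).closure isClosed_closure hx
  set φ : ι → Dual ℂ X := fun i => f.comp (.single ℂ (fun _ => X) i)
  have : FiniteDimensional ℂ (Submodule.span ℂ (Set.range φ)) :=
    FiniteDimensional.span_of_finite ℂ (Set.finite_range φ)
  obtain ⟨T, hTX, hTF, hTc⟩ := hX (F ⊔ Submodule.span ℂ (Set.range φ)) G
    (Submodule.finiteDimensional_sup _ _) inferInstance (c - lam) (sub_pos.2 hc)
  choose v hv using fun i => hTX _ (hxG i)
  have hvK : v ∈ {v : ι → X | ∃ T, IsLocalReflexivityOperator F G c T ∧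
      ∀ i, inclusionInDoubleDual ℂ X (v i) = T (inclusionInDoubleDual ℂ X (x i))} :=
    ⟨T, ⟨fun g hg => hTX g hg, fun g hg f hf => hTF g hg f (le_sup_left (a := F) hf),
      by linarith⟩, hv⟩
  -- `T` preserves the pairing of `ι (x i)` with `φ i`, hence `f v = ∑ i, φ i (v i) = f x`.
  have hfv : f v = f x := by
    rw [← ContinuousLinearMap.sum_comp_single ℂ (fun _ => X) f v,
      ← ContinuousLinearMap.sum_comp_single ℂ (fun _ => X) f x]
    refine Finset.sum_congr rfl fun i _ => ?_
    have := hTF _ (hxG i) (φ i) (le_sup_right (a := F) (Submodule.subset_span ⟨i, rfl⟩))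
    rwa [← hv i, dual_def, dual_def] at this
  linarith [hfK v (subset_closure hvK), congrArg RCLike.re hfv]

theorem IsELR.exists_isLocalReflexivityOperator_norm_sub_apply_le {lam : ℝ}
    (hX : IsELR X lam) (F : Subspace ℂ (Dual ℂ X)) (G : Subspace ℂ (Dual ℂ (Dual ℂ X)))
    [FiniteDimensional ℂ F] [FiniteDimensional ℂ G] {c : ℝ} (hc : lam < c)
    (V : Submodule ℂ (Dual ℂ (Dual ℂ X))) [FiniteDimensional ℂ V]
    (hV : V ≤ G ⊓ (inclusionInDoubleDual ℂ X).range) {η : ℝ} (hη : 0 < η) :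
    ∃ T, IsLocalReflexivityOperator F G c T ∧ ∀ v ∈ V, ‖v - T v‖ ≤ η * ‖v‖ := by
  obtain ⟨n, e, C, hC, hCe⟩ := Submodule.exists_norm_apply_le_of_finiteDimensional (𝕜 := ℂ)
    (E := Dual ℂ (Dual ℂ X)) (F := Dual ℂ (Dual ℂ X)) V
  choose x hx using fun i => (hV (e i).2).2
  have hxG : ∀ i, inclusionInDoubleDual ℂ X (x i) ∈ G := fun i => hx i ▸ (hV (e i).2).1
  obtain ⟨w, ⟨T, hT, hwT⟩, hxw⟩ := Metric.mem_closure_iff.1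
    (hX.mem_closure_setOf_exists_isLocalReflexivityOperator F G hc x hxG) (η / C) (div_pos hη hC)
  refine ⟨T, hT, fun v hv => ?_⟩
  have hu : ∀ z, (ContinuousLinearMap.id ℂ (Dual ℂ (Dual ℂ X)) - T) z = z - T z := fun z => rfl
  have hTe : ∀ i, ‖(ContinuousLinearMap.id ℂ (Dual ℂ (Dual ℂ X)) - T) (e i)‖ ≤ η / C :=
    fun i => by
      rw [hu, ← hx i, ContinuousLinearMap.coe_coe, ← hwT i, ← map_sub,
        norm_inclusionInDoubleDual, ← dist_eq_norm]
      exact (dist_le_pi_dist x w i).trans hxw.le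
  calc ‖v - T v‖ = ‖(ContinuousLinearMap.id ℂ (Dual ℂ (Dual ℂ X)) - T) v‖ := by rw [hu]
    _ ≤ C * (η / C) * ‖v‖ := hCe _ (div_pos hη hC).le hTe v hv
    _ = η * ‖v‖ := by rw [mul_div_cancel₀ η hC.ne']

theorem IsLocalReflexivityOperator.add_id_sub_comp (hT : IsLocalReflexivityOperator F G c T)
    {V : Submodule ℂ (Dual ℂ (Dual ℂ X))} (hV : V ≤ G ⊓ (inclusionInDoubleDual ℂ X).range)
    {Q : Dual ℂ (Dual ℂ X) →L[ℂ] Dual ℂ (Dual ℂ X)} (hQV : ∀ z, Q z ∈ V) {η : ℝ} (hη : 0 ≤ η)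
    (hTV : ∀ v ∈ V, ‖v - T v‖ ≤ η * ‖v‖) :
    IsLocalReflexivityOperator F G (c + η * ‖Q‖)
      (T + (ContinuousLinearMap.id ℂ (Dual ℂ (Dual ℂ X)) - T) ∘L Q) := by
  obtain ⟨hTX, hTF, hTc⟩ := hT
  have hQG z : Q z ∈ G := (hV (hQV z)).1
  refine ⟨fun g hg => ?_, fun g hg f hf => ?_, ?_⟩
  · exact Submodule.add_mem _ (hTX g hg) (Submodule.sub_mem _ (hV (hQV g)).2 (hTX _ (hQG g)))
  · change T g f + (Q g f - T (Q g) f) = g f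
    rw [hTF g hg f hf, hTF _ (hQG g) f hf, sub_self, add_zero]
  · have := ContinuousLinearMap.opNorm_add_id_sub_comp_le (𝕜 := ℂ)
      (E := Dual ℂ (Dual ℂ X)) T Q (V := V) hQV hη hTV
    exact this.trans (by gcongr)

end LocalReflexivity

theorem stmt4_general (X : Type*) [NormedAddCommGroup X] [NormedSpace ℂ X]
    (lam : ℝ) (hELR : IsELR X lam) :
    ∀ (F : Subspace ℂ (Dual ℂ X)) (G : Subspace ℂ (Dual ℂ (Dual ℂ X))),
      FiniteDimensional ℂ F → FiniteDimensional ℂ G →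
      ∀ ε : ℝ, 0 < ε →
        ∃ T : Dual ℂ (Dual ℂ X) →L[ℂ] Dual ℂ (Dual ℂ X),
          (∀ g ∈ G, T g ∈ Set.range (inclusionInDoubleDual ℂ X)) ∧
          (∀ g ∈ G, ∀ f ∈ F, T g f = g f) ∧
          ‖T‖ < lam + ε ∧
          (∀ g ∈ G, g ∈ Set.range (inclusionInDoubleDual ℂ X) → T g = g) := by
  intro F G _ _ ε hε
  set V : Submodule ℂ (Dual ℂ (Dual ℂ X)) := G ⊓ (inclusionInDoubleDual ℂ X).range
  have : FiniteDimensional ℂ V := Submodule.finiteDimensional_of_le inf_le_left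
  obtain ⟨P, hP⟩ := Submodule.ClosedComplemented.of_finiteDimensional V
  set Q := V.subtypeL ∘L P
  set η := ε / (2 * (‖Q‖ + 1))
  have hη : 0 < η := by positivity
  obtain ⟨T, hT, hTV⟩ := hELR.exists_isLocalReflexivityOperator_norm_sub_apply_le F G
    (c := lam + ε / 2) (by linarith) V le_rfl hη
  obtain ⟨hT'X, hT'F, hT'c⟩ := hT.add_id_sub_comp le_rfl (Q := Q) (fun z => (P z).2) hη.le hTV
  refine ⟨_, hT'X, hT'F, hT'c.trans_lt ?_, fun g hg hgX => ?_⟩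
  · have : η * ‖Q‖ < ε / 2 := by
      rw [div_mul_eq_mul_div, div_lt_iff₀ (by positivity)]
      nlinarith [norm_nonneg Q]
    linarith
  · have hQg : Q g = g := congrArg Subtype.val (hP ⟨g, hg, hgX⟩)
    change T g + (Q g - T (Q g)) = g
    rw [hQg, add_sub_cancel]

/-- If `X` is `λ`-extendably locally reflexive, then the local reflexivity operators
`T : X** → X**` can in addition be chosen with `Tg = g` for every `g ∈ G ∩ ι_X(X)`. -/
theorem stmt4 (X : Type*) [NormedAddCommGroup X] [NormedSpace ℂ X] [CompleteSpace X]
    (lam : ℝ) (hlam : 1 ≤ lam) (hELR : IsELR X lam) :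
    ∀ (F : Subspace ℂ (Dual ℂ X)) (G : Subspace ℂ (Dual ℂ (Dual ℂ X))),
      FiniteDimensional ℂ F → FiniteDimensional ℂ G →
      ∀ ε : ℝ, 0 < ε →
        ∃ T : Dual ℂ (Dual ℂ X) →L[ℂ] Dual ℂ (Dual ℂ X),
          (∀ g ∈ G, T g ∈ Set.range (inclusionInDoubleDual ℂ X)) ∧
          (∀ g ∈ G, ∀ f ∈ F, T g f = g f) ∧
          ‖T‖ < lam + ε ∧
          (∀ g ∈ G, g ∈ Set.range (inclusionInDoubleDual ℂ X) → T g = g) :=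
  stmt4_general X lam hELR
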